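/- If A ⊆ ℝ² is a set whose distance set satisfies Δ(A) ⊆ {4n + 1 : n ∈ ℕ}, then A has at most 3 elements. -/

import Mathlib

/-!
For four points `p₀, …, p₃` of the plane the vectors `pᵢ - p₀` are linearly dependent, so their
Gram matrix `G` is singular. By polarization `2G` has the integer entries
`|p₀pᵢ|² + |p₀pⱼ|² - |pᵢpⱼ|²`, and odd squares are `1` mod `8`, so `2G ≡ I + J (mod 8)`, whose
determinant is `4`. Hence `0 = det 2G ≡ 4 (mod 8)`, which is absurd. The same computation shows
that `m` points with odd integer mutual distances in dimension at most `m - 2` force `8 ∣ m`.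
-/

open Matrix Module
open scoped RealInnerProductSpace

section InnerProductSpace

variable {E : Type*} [NormedAddCommGroup E] [InnerProductSpace ℝ E]

theorem Matrix.det_gram_eq_zero_of_finrank_lt [FiniteDimensional ℝ E] {ι : Type*} [Fintype ι]
    [DecidableEq ι] {v : ι → E} (h : finrank ℝ E < Fintype.card ι) : (gram ℝ v).det = 0 := by
  by_contra hdet
  exact (linearIndependent_of_det_gram_ne_zero hdet).fintype_card_le_finrank.not_gt h

theorem two_mul_inner_sub_sub_eq_dist_sq (a b c : E) :
    2 * ⟪b - a, c - a⟫ = dist a b ^ 2 + dist a c ^ 2 - dist b c ^ 2 := by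
  rw [real_inner_eq_norm_mul_self_add_norm_mul_self_sub_norm_sub_mul_self_div_two,
    sub_sub_sub_cancel_right, dist_comm a b, dist_comm a c, dist_eq_norm, dist_eq_norm,
    dist_eq_norm]
  ring

end InnerProductSpace

/-- When `D i j = dist (p i) (p j) ^ 2`, this is twice the Gram matrix of the vectors
`p i.succ - p 0`; written through `D` alone it makes sense over `ℤ` and `ZMod 8`. -/
def sqDistGram {R : Type*} [Add R] [Sub R] {n : ℕ} (D : Fin (n + 1) → Fin (n + 1) → R) :
    Matrix (Fin n) (Fin n) R :=
  of fun i j => D 0 i.succ + D 0 j.succ - D i.succ j.succ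

theorem RingHom.mapMatrix_sqDistGram {R S : Type*} [Ring R] [Ring S] (f : R →+* S) {n : ℕ}
    (D : Fin (n + 1) → Fin (n + 1) → R) :
    f.mapMatrix (sqDistGram D) = sqDistGram fun i j => f (D i j) := by
  ext i j
  simp [sqDistGram]

theorem det_sqDistGram_dist_sq_eq_zero {E : Type*} [NormedAddCommGroup E]
    [InnerProductSpace ℝ E] [FiniteDimensional ℝ E] {n : ℕ} (hn : finrank ℝ E < n)
    (p : Fin (n + 1) → E) : (sqDistGram fun i j => dist (p i) (p j) ^ 2).det = 0 := by
  have hgram : (sqDistGram fun i j => dist (p i) (p j) ^ 2) =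
      (2 : ℝ) • gram ℝ fun i => p i.succ - p 0 := by
    ext i j
    simp [sqDistGram, two_mul_inner_sub_sub_eq_dist_sq]
  rw [hgram, det_smul, det_gram_eq_zero_of_finrank_lt (by simpa using hn), mul_zero]

theorem det_sqDistGram_of_eq_one {R : Type*} [CommRing R] {n : ℕ}
    {D : Fin (n + 1) → Fin (n + 1) → R} (hdiag : ∀ i, D i i = 0)
    (hoff : Pairwise fun i j => D i j = 1) : (sqDistGram D).det = n + 1 := by
  have hdet := det_one_add_replicateCol_mul_replicateRow (ι := Unit) (fun _ : Fin n => (1 : R))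
    fun _ => 1
  simp only [dotProduct, mul_one, Finset.sum_const, Finset.card_univ, Fintype.card_fin,
    nsmul_eq_mul, add_comm (1 : R)] at hdet
  rw [← hdet]
  congr 1
  ext i j
  have hrow := hoff (Fin.succ_ne_zero i).symm
  have hcol := hoff (Fin.succ_ne_zero j).symm
  rcases eq_or_ne i j with rfl | hij
  · simp [sqDistGram, hdiag, hrow, ← vecMulVec_eq, vecMulVec_apply]
  · simp [sqDistGram, hrow, hcol, hoff (Fin.succ_injective _ |>.ne hij), one_apply_ne hij,
      ← vecMulVec_eq, vecMulVec_apply]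

theorem ZMod.intCast_sq_eq_one_of_odd {m : ℤ} (hm : Odd m) : ((m ^ 2 : ℤ) : ZMod 8) = 1 := by
  obtain ⟨k, rfl⟩ := hm
  push_cast
  generalize (k : ZMod 8) = x
  revert x
  decide

theorem eight_dvd_of_pairwise_dist_odd_int {E : Type*} [NormedAddCommGroup E]
    [InnerProductSpace ℝ E] [FiniteDimensional ℝ E] {n : ℕ} (hn : finrank ℝ E < n)
    {p : Fin (n + 1) → E} (hp : Pairwise fun i j => ∃ m : ℤ, Odd m ∧ dist (p i) (p j) = m) :
    8 ∣ n + 1 := by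
  have hint : ∀ i j, ∃ m : ℤ, dist (p i) (p j) = m ∧ (i ≠ j → Odd m) := by
    intro i j
    rcases eq_or_ne i j with rfl | hij
    · exact ⟨0, by simp, fun h => absurd rfl h⟩
    · obtain ⟨m, hm, hdist⟩ := hp hij
      exact ⟨m, hdist, fun _ => hm⟩
  choose d hd hodd using hint
  have hdiag (i) : d i i = 0 := by exact_mod_cast (hd i i).symm.trans (dist_self _)
  have hreal : (Int.castRingHom ℝ) (sqDistGram fun i j => d i j ^ 2).det = 0 := by
    rw [RingHom.map_det, RingHom.mapMatrix_sqDistGram]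
    simpa [← hd] using det_sqDistGram_dist_sq_eq_zero hn p
  have hmod8 : (Int.castRingHom (ZMod 8)) (sqDistGram fun i j => d i j ^ 2).det = n + 1 := by
    rw [RingHom.map_det, RingHom.mapMatrix_sqDistGram]
    exact det_sqDistGram_of_eq_one (by simp [hdiag]) fun i j hij =>
      ZMod.intCast_sq_eq_one_of_odd (hodd i j hij)
  have hdet : (sqDistGram fun i j => d i j ^ 2).det = 0 := by simpa using hreal
  rw [hdet, map_zero] at hmod8
  exact (ZMod.natCast_eq_zero_iff _ _).mp (by exact_mod_cast hmod8.symm)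

/-- If all pairwise distances between distinct points of `A ⊆ ℝ²` lie in
`{4n + 1 : n ∈ ℕ}`, then `A` has at most 3 elements. -/
theorem distance_set_four_int_plus_one (A : Set (EuclideanSpace ℝ (Fin 2)))
    (hA : ∀ a ∈ A, ∀ a' ∈ A, a ≠ a' → ∃ n : ℕ, dist a a' = 4 * (n : ℝ) + 1) :
    A.Finite ∧ A.ncard ≤ 3 := by
  rw [← Set.encard_le_coe_iff_finite_ncard_le]
  by_contra! hA4
  have h4 : (4 : ℕ∞) ≤ A.encard := Order.add_one_le_of_lt hA4
  obtain ⟨p, -⟩ := Fin.Embedding.exists_embedding_disjoint_range_of_add_le_ENat_card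
    (s := (∅ : Set A)) (n := 4) (by simpa using h4)
  have hodd : Pairwise fun i j =>
      ∃ m : ℤ, Odd m ∧ dist (p i : EuclideanSpace ℝ (Fin 2)) (p j) = m := by
    intro i j hij
    obtain ⟨k, hk⟩ := hA _ (p i).2 _ (p j).2 (Subtype.val_injective.ne (p.injective.ne hij))
    exact ⟨4 * k + 1, ⟨2 * k, by ring⟩, by push_cast; exact hk⟩
  exact absurd (eight_dvd_of_pairwise_dist_odd_int (by simp) hodd) (by norm_num)
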